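/- arXiv:1101.4446 — 2 statements merged into one kernel-verified Lean document; each statement's English description precedes it below -/
import Mathlib

section
/- There exist universal constants c > 0 and C > 0 such that for every δ ∈ (0,1) and every integer K > 1 there is a frog-strategy T with the following properties for every b ∈ {0,1}^ω: (i) π_{T,b}(i) = 0 for every i with K < i < ∞; (ii) for every δ' with (b_1 + … + b_{K−1})/(K−1) ≤ δ' < δ, one has π_{T,b}(∞) ≤ 1 − c·(δ − δ')²/δ; (iii) DP(T,b) ≤ (δ/(1−δ))·Succ(T,b) + C·δ/((1−δ)·K). -/
/-!
The frog crosses at minute `i + 1` with probability `w i`, a weight computed from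
`b_1, …, b_i`, until the total mass `1` is used up, and never after minute `K`. Write
`ρ = δ / (1 - δ)`. If a potential `G ≥ 0` satisfies `G (j + 1) + w j ≤ G j` after a car and
`G (j + 1) ≤ G j + ρ * w j` after a free minute, then `DP ≤ ρ * Succ + G 0`, and the
truncation to total mass `1` preserves this.

Two weights are superposed. The first is a constant rate while at most `δ (K - 1)` cars have
passed; its potential is the rate times the remaining allowance of cars. The second is
`β (a_i - 1)⁺` for the margin `a_i = δ i - N_i`, with potential `β (a_i⁺)² / (2 (1 - δ))`
plus a term linear in the remaining time. Both potentials start at `ρ / (2K)`.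

If `N_{K-1} ≤ δ' (K - 1)`, the margin reaches `(δ - δ') (K - 1)`, while `(a⁺)²` grows by at most
`2 δ (a - 1)⁺ + 3 δ` per minute; so once `(δ - δ')² (K - 1)² ≳ δ K` the margin weights add up
to order `(δ - δ')² / δ`. Otherwise that quantity is `O(min(δ, 1/K))`, which the constant
rate, active at every minute before `K`, already supplies.
-/

/-- A frog-strategy: for each infinite binary sequence `b` (0-indexed: `b i` is bit `b_{i+1}`),
a probability distribution on `ℕ ∪ {∞}`, where `some i` means "cross at minute `i+1`" and
`none` means "wait forever".  The distribution at minute `i+1` may depend only on the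
first `i` bits of `b`. -/
structure FrogStrategy where
  prob : (ℕ → Bool) → Option ℕ → ℝ
  nonneg : ∀ b o, 0 ≤ prob b o
  total : ∀ b, ∑' o : Option ℕ, prob b o = 1
  adapted : ∀ b b' : ℕ → Bool, ∀ i : ℕ,
    (∀ j, j < i → b j = b' j) → prob b (some i) = prob b' (some i)

/-- Success probability: total probability of crossing at a minute with no car. -/
noncomputable def succProb (S : FrogStrategy) (b : ℕ → Bool) : ℝ :=
  ∑' i : ℕ, if b i = false then S.prob b (some i) else 0

/-- Death probability: total probability of crossing at a minute with a car. -/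
noncomputable def deathProb (S : FrogStrategy) (b : ℕ → Bool) : ℝ :=
  ∑' i : ℕ, if b i = true then S.prob b (some i) else 0

/-- `cars b t` is `N_t(b) = b_1 + ⋯ + b_t`, the number of cars among the first `t` minutes. -/
def cars (b : ℕ → Bool) (t : ℕ) : ℕ :=
  ((Finset.range t).filter (fun i => b i = true)).card

/-- `b` is `ε`-weakly sparse if `lim_{s→∞} inf_{t ≥ s} N_t(b)/t ≤ ε`. -/
def epsWeaklySparse (ε : ℝ) (b : ℕ → Bool) : Prop :=
  Filter.liminf (fun t : ℕ => (cars b t : ℝ) / t) Filter.atTop ≤ ε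

open Finset

/-- Crossing with probability `w i` at minute `i + 1` until the total mass `1` is used up. -/
noncomputable def truncate (w : ℕ → ℝ) (i : ℕ) : ℝ :=
  min (∑ j ∈ range (i + 1), w j) 1 - min (∑ j ∈ range i, w j) 1

section truncate

variable {w : ℕ → ℝ}

lemma truncate_nonneg (hw : ∀ i, 0 ≤ w i) (i : ℕ) : 0 ≤ truncate w i :=
  sub_nonneg.2 <| min_le_min_right _ <| by simp [sum_range_succ, hw i]

lemma truncate_le (hw : ∀ i, 0 ≤ w i) (i : ℕ) : truncate w i ≤ w i := by
  have := min_le_min_left (∑ j ∈ range i, w j + w i) (le_add_of_nonneg_right (hw i) :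
    (1 : ℝ) ≤ 1 + w i)
  rw [min_add_add_right] at this
  rw [truncate, sum_range_succ]
  linarith

lemma sum_range_truncate (n : ℕ) : ∑ i ∈ range n, truncate w i = min (∑ i ∈ range n, w i) 1 := by
  simp [truncate, sum_range_sub (fun i => min (∑ j ∈ range i, w j) 1)]

lemma truncate_eq_self (hw : ∀ i, 0 ≤ w i) {i : ℕ} (h : ∑ j ∈ range (i + 1), w j ≤ 1) :
    truncate w i = w i := by
  rw [sum_range_succ] at h
  rw [truncate, sum_range_succ, min_eq_left h, min_eq_left (by linarith [hw i])]
  ring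

lemma truncate_eq_zero (hw : ∀ i, 0 ≤ w i) {i : ℕ} (h : 1 ≤ ∑ j ∈ range i, w j) :
    truncate w i = 0 := by
  rw [truncate, sum_range_succ, min_eq_right h, min_eq_right (by linarith [hw i]), sub_self]

lemma truncate_congr {w' : ℕ → ℝ} {i : ℕ} (h : ∀ j ≤ i, w j = w' j) :
    truncate w i = truncate w' i := by
  have h' (n : ℕ) (hn : n ≤ i + 1) : ∑ j ∈ range n, w j = ∑ j ∈ range n, w' j :=
    sum_congr rfl fun j hj => h j (by simp at hj; omega)
  rw [truncate, truncate, h' _ le_rfl, h' _ (by omega)]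

end truncate

/-- The contribution to `DP - ρ * Succ` of crossing with probability `x` at a minute whose car
indicator is `c`. -/
def netDeath (ρ : ℝ) (c : Bool) (x : ℝ) : ℝ := if c then x else -(ρ * x)

section netDeath

variable {ρ : ℝ} {c : Bool}

@[simp] lemma netDeath_zero : netDeath ρ c 0 = 0 := by simp [netDeath]

lemma netDeath_add (x y : ℝ) : netDeath ρ c (x + y) = netDeath ρ c x + netDeath ρ c y := by
  cases c <;> simp [netDeath]
  ring

lemma netDeath_le_max {x y : ℝ} (hρ : 0 ≤ ρ) (hx : 0 ≤ x) (hxy : x ≤ y) :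
    netDeath ρ c x ≤ max (netDeath ρ c y) 0 := by
  cases c
  · exact le_max_of_le_right (by simp [netDeath]; positivity)
  · exact le_max_of_le_left hxy

lemma sum_netDeath_truncate_le {b : ℕ → Bool} {w G : ℕ → ℝ} {n : ℕ} (hρ : 0 ≤ ρ)
    (hw : ∀ i, 0 ≤ w i) (hG : ∀ j ≤ n, 0 ≤ G j)
    (hstep : ∀ j < n, netDeath ρ (b j) (w j) ≤ G j - G (j + 1)) :
    ∑ j ∈ range n, netDeath ρ (b j) (truncate w j) ≤ G 0 := by
  -- Zeroing the potential once the mass is spent keeps every step telescoping: the step at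
  -- which the mass runs out costs at most `G j`, since `0 ≤ G (j + 1)`.
  set H : ℕ → ℝ := fun j => if ∑ i ∈ range j, w i < 1 then G j else 0 with hH
  have hstepH : ∀ j < n, netDeath ρ (b j) (truncate w j) ≤ H j - H (j + 1) := by
    intro j hj
    by_cases hlive : ∑ i ∈ range (j + 1), w i < 1
    · have hlive' : ∑ i ∈ range j, w i < 1 := by
        rw [sum_range_succ] at hlive; linarith [hw j]
      simp only [hH, if_pos hlive, if_pos hlive', truncate_eq_self hw hlive.le]
      exact hstep j hj
    by_cases hlive' : ∑ i ∈ range j, w i < 1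
    · simp only [hH, if_pos hlive', if_neg hlive, sub_zero]
      calc netDeath ρ (b j) (truncate w j)
          ≤ max (netDeath ρ (b j) (w j)) 0 :=
            netDeath_le_max hρ (truncate_nonneg hw j) (truncate_le hw j)
        _ ≤ G j := max_le (by linarith [hstep j hj, hG (j + 1) hj]) (hG j hj.le)
    · simp [hH, hlive, hlive', truncate_eq_zero hw (not_lt.1 hlive')]
  calc ∑ j ∈ range n, netDeath ρ (b j) (truncate w j)
      ≤ ∑ j ∈ range n, (H j - H (j + 1)) := sum_le_sum fun j hj => hstepH j (mem_range.1 hj)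
    _ = H 0 - H n := sum_range_sub' H n
    _ ≤ G 0 := by
      have := hG n le_rfl
      simp only [hH, sum_range_zero, if_pos zero_lt_one]
      split_ifs <;> linarith

end netDeath

namespace FrogStrategy

noncomputable def ofWeights (K : ℕ) (w : (ℕ → Bool) → ℕ → ℝ) (hw : ∀ b i, 0 ≤ w b i)
    (hadapt : ∀ b b' i, (∀ j < i, b j = b' j) → w b i = w b' i) : FrogStrategy where
  prob b o := o.elim (1 - min (∑ i ∈ range K, w b i) 1) fun i =>
    if i < K then truncate (w b) i else 0
  nonneg b o := by
    cases o
    · exact sub_nonneg.2 (min_le_right _ _)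
    · dsimp only [Option.elim]
      split_ifs
      exacts [truncate_nonneg (hw b) _, le_rfl]
  total b := by
    rw [tsum_eq_sum (s := insertNone (range K)), sum_insertNone]
    · simp only [Option.elim]
      rw [sum_congr rfl fun i hi => if_pos (mem_range.1 hi), sum_range_truncate]
      ring
    · intro o ho
      cases o with
      | none => simp at ho
      | some i => simp_all
  adapted b b' i h := by
    dsimp only [Option.elim]
    split_ifs
    · exact truncate_congr fun j hj => hadapt b b' j fun k hk => h k (by omega)
    · rfl

variable {K : ℕ} {w : (ℕ → Bool) → ℕ → ℝ} {hw : ∀ b i, 0 ≤ w b i}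
  {hadapt : ∀ b b' i, (∀ j < i, b j = b' j) → w b i = w b' i}

@[simp] lemma ofWeights_prob_none (b : ℕ → Bool) :
    (ofWeights K w hw hadapt).prob b none = 1 - min (∑ i ∈ range K, w b i) 1 := rfl

@[simp] lemma ofWeights_prob_some (b : ℕ → Bool) (i : ℕ) :
    (ofWeights K w hw hadapt).prob b (some i) = if i < K then truncate (w b) i else 0 := rfl

lemma tsum_ofWeights_prob_some {g : ℕ → ℝ → ℝ} (hg : ∀ i, g i 0 = 0) (b : ℕ → Bool) :
    ∑' i, g i ((ofWeights K w hw hadapt).prob b (some i)) =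
      ∑ i ∈ range K, g i (truncate (w b) i) := by
  rw [tsum_eq_sum (s := range K)]
  · exact sum_congr rfl fun i hi => by simp [mem_range.1 hi]
  · intro i hi
    rw [ofWeights_prob_some, if_neg (by simpa using hi), hg]

lemma deathProb_ofWeights_le {ρ : ℝ} (hρ : 0 ≤ ρ) (b : ℕ → Bool) {G : ℕ → ℝ}
    (hG : ∀ j ≤ K, 0 ≤ G j) (hstep : ∀ j < K, netDeath ρ (b j) (w b j) ≤ G j - G (j + 1)) :
    deathProb (ofWeights K w hw hadapt) b ≤ ρ * succProb (ofWeights K w hw hadapt) b + G 0 := by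
  have hD : deathProb (ofWeights K w hw hadapt) b =
      ∑ i ∈ range K, if b i = true then truncate (w b) i else 0 :=
    tsum_ofWeights_prob_some (g := fun i x => if b i = true then x else 0) (by simp) b
  have hS : succProb (ofWeights K w hw hadapt) b =
      ∑ i ∈ range K, if b i = false then truncate (w b) i else 0 :=
    tsum_ofWeights_prob_some (g := fun i x => if b i = false then x else 0) (by simp) b
  have hnet : ∑ j ∈ range K, netDeath ρ (b j) (truncate (w b) j) =
      deathProb (ofWeights K w hw hadapt) b - ρ * succProb (ofWeights K w hw hadapt) b := by
    rw [hD, hS, mul_sum, ← sum_sub_distrib]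
    exact sum_congr rfl fun i _ => by cases b i <;> simp [netDeath]
  linarith [sum_netDeath_truncate_le hρ (hw b) hG hstep]

end FrogStrategy

section cars

variable {b b' : ℕ → Bool}

lemma cars_succ (b : ℕ → Bool) (i : ℕ) :
    (cars b (i + 1) : ℝ) = cars b i + if b i = true then 1 else 0 := by
  unfold cars
  rw [range_add_one, filter_insert]
  split_ifs with h
  · rw [card_insert_of_notMem (by simp)]
    push_cast
    ring
  · simp

lemma cars_mono (b : ℕ → Bool) : Monotone (cars b) := fun _ _ h =>
  card_le_card (filter_subset_filter _ (range_subset_range.2 h))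

lemma cars_congr {i : ℕ} (h : ∀ j < i, b j = b' j) : cars b i = cars b' i := by
  unfold cars
  congr 1
  exact filter_congr fun j hj => by rw [h j (mem_range.1 hj)]

end cars

noncomputable def capWeight (m E : ℝ) (b : ℕ → Bool) (i : ℕ) : ℝ :=
  if (cars b i : ℝ) ≤ m then E else 0

noncomputable def capPotential (m E : ℝ) (b : ℕ → Bool) (j : ℕ) : ℝ :=
  if (cars b j : ℝ) ≤ m then E * (m + 1 - cars b j) else 0

section cap

variable {m E ρ : ℝ} {b b' : ℕ → Bool}

lemma capWeight_nonneg (hE : 0 ≤ E) (b : ℕ → Bool) (i : ℕ) : 0 ≤ capWeight m E b i := by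
  unfold capWeight
  split_ifs <;> simp [hE]

lemma capWeight_congr {i : ℕ} (h : ∀ j < i, b j = b' j) :
    capWeight m E b i = capWeight m E b' i := by
  rw [capWeight, capWeight, cars_congr h]

lemma capPotential_nonneg (hE : 0 ≤ E) (b : ℕ → Bool) (j : ℕ) : 0 ≤ capPotential m E b j := by
  unfold capPotential
  split_ifs
  · exact mul_nonneg hE (by linarith)
  · exact le_rfl

lemma capPotential_zero (hm : 0 ≤ m) (b : ℕ → Bool) : capPotential m E b 0 = E * (m + 1) := by
  simp [capPotential, cars, hm]

lemma netDeath_capWeight_le (hρ : 0 ≤ ρ) (hE : 0 ≤ E) (b : ℕ → Bool) (j : ℕ) :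
    netDeath ρ (b j) (capWeight m E b j) ≤ capPotential m E b j - capPotential m E b (j + 1) := by
  unfold netDeath capWeight capPotential
  rw [cars_succ]
  cases b j <;> simp only [Bool.false_eq_true, if_false, if_true, add_zero] <;> split_ifs <;>
    nlinarith

lemma sum_capWeight_eq {n : ℕ} (h : (cars b n : ℝ) ≤ m) :
    ∑ i ∈ range n, capWeight m E b i = n * E := by
  have hactive (i : ℕ) (hi : i ∈ range n) : capWeight m E b i = E :=
    if_pos <| le_trans (by exact_mod_cast cars_mono b (mem_range.1 hi).le) h
  simp [sum_congr rfl hactive]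

end cap

section realIneq

variable {δ : ℝ}

lemma sq_max_add_le (hδ0 : 0 ≤ δ) (hδ1 : δ ≤ 1) (a : ℝ) :
    max (a + δ) 0 ^ 2 ≤ max a 0 ^ 2 + 2 * δ * max (a - 1) 0 + 3 * δ := by
  have h1 : max (a + δ) 0 ≤ max a 0 + δ :=
    max_le (by linarith [le_max_left a 0]) (by linarith [le_max_right a 0])
  have h2 : max a 0 ≤ max (a - 1) 0 + 1 :=
    max_le (by linarith [le_max_left (a - 1) 0]) (by linarith [le_max_right (a - 1) 0])
  have h3 := pow_le_pow_left₀ (le_max_right _ _) h1 2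
  nlinarith [le_max_right a 0]

lemma two_mul_max_sub_one_add_sq_le (hδ0 : 0 ≤ δ) (hδ1 : δ ≤ 1) (a : ℝ) :
    2 * (1 - δ) * max (a - 1) 0 + max (a + δ - 1) 0 ^ 2 ≤ max a 0 ^ 2 := by
  rcases le_or_gt a 1 with ha | ha
  · rw [max_eq_right (by linarith : a - 1 ≤ 0), mul_zero, zero_add]
    exact pow_le_pow_left₀ (le_max_right _ _) (max_le_max (by linarith) le_rfl) 2
  · rw [max_eq_left (by linarith : 0 ≤ a - 1), max_eq_left (by linarith : 0 ≤ a + δ - 1),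
      max_eq_left (by linarith : 0 ≤ a)]
    nlinarith

end realIneq

noncomputable def margin (δ : ℝ) (b : ℕ → Bool) (i : ℕ) : ℝ := δ * i - cars b i

noncomputable def marginWeight (δ β : ℝ) (b : ℕ → Bool) (i : ℕ) : ℝ :=
  β * max (margin δ b i - 1) 0

noncomputable def marginPotential (δ β T : ℝ) (b : ℕ → Bool) (j : ℕ) : ℝ :=
  β / (2 * (1 - δ)) * max (margin δ b j) 0 ^ 2 + 3 * β * δ / (2 * (1 - δ)) * (T - j)

section margin

variable {δ β T : ℝ} {b b' : ℕ → Bool}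

@[simp] lemma margin_zero (δ : ℝ) (b : ℕ → Bool) : margin δ b 0 = 0 := by simp [margin, cars]

lemma margin_succ (δ : ℝ) (b : ℕ → Bool) (i : ℕ) :
    margin δ b (i + 1) = margin δ b i + δ - if b i = true then 1 else 0 := by
  rw [margin, margin, cars_succ]
  push_cast
  ring

lemma marginWeight_nonneg (hβ : 0 ≤ β) (b : ℕ → Bool) (i : ℕ) : 0 ≤ marginWeight δ β b i :=
  mul_nonneg hβ (le_max_right _ _)

lemma marginWeight_congr {i : ℕ} (h : ∀ j < i, b j = b' j) :
    marginWeight δ β b i = marginWeight δ β b' i := by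
  rw [marginWeight, marginWeight, margin, margin, cars_congr h]

lemma marginPotential_nonneg (hδ0 : 0 ≤ δ) (hδ1 : δ < 1) (hβ : 0 ≤ β) {j : ℕ} (hj : (j : ℝ) ≤ T)
    (b : ℕ → Bool) : 0 ≤ marginPotential δ β T b j := by
  have h1δ : 0 < 1 - δ := by linarith
  have hT : 0 ≤ T - j := by linarith
  unfold marginPotential
  positivity

lemma marginPotential_zero (b : ℕ → Bool) :
    marginPotential δ β T b 0 = 3 * β * δ / (2 * (1 - δ)) * T := by
  simp [marginPotential]

lemma netDeath_marginWeight_le (hδ0 : 0 ≤ δ) (hδ1 : δ < 1) (hβ : 0 ≤ β) (b : ℕ → Bool) (j : ℕ) :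
    netDeath (δ / (1 - δ)) (b j) (marginWeight δ β b j) ≤
      marginPotential δ β T b j - marginPotential δ β T b (j + 1) := by
  have h1δ : 0 < 1 - δ := by linarith
  set γ := β / (2 * (1 - δ)) with hγ
  have hγ0 : 0 ≤ γ := by positivity
  have hβγ : β = γ * (2 * (1 - δ)) := by rw [hγ]; field_simp
  have hρβ : δ / (1 - δ) * β = γ * (2 * δ) := by rw [hγ]; field_simp
  have hε : 3 * β * δ / (2 * (1 - δ)) = γ * (3 * δ) := by rw [hγ]; field_simp
  unfold netDeath marginWeight marginPotential
  rw [margin_succ, hε, ← hγ]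
  set a := margin δ b j
  cases b j
  · have := mul_le_mul_of_nonneg_left (sq_max_add_le hδ0 hδ1.le a) hγ0
    simp only [Bool.false_eq_true, if_false, sub_zero, ← mul_assoc, hρβ]
    push_cast
    nlinarith
  · have := mul_le_mul_of_nonneg_left (two_mul_max_sub_one_add_sq_le hδ0 hδ1.le a) hγ0
    simp only [if_true]
    push_cast
    rw [hβγ]
    nlinarith

lemma sq_max_margin_le (hδ0 : 0 ≤ δ) (hδ1 : δ ≤ 1) (b : ℕ → Bool) (n : ℕ) :
    max (margin δ b n) 0 ^ 2 ≤ 2 * δ * ∑ i ∈ range n, max (margin δ b i - 1) 0 + 3 * δ * n := by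
  induction n with
  | zero => simp
  | succ n ih =>
    rw [margin_succ, sum_range_succ]
    push_cast
    cases b n
    · simp only [Bool.false_eq_true, if_false, sub_zero]
      nlinarith [sq_max_add_le hδ0 hδ1 (margin δ b n)]
    · simp only [if_true]
      nlinarith [two_mul_max_sub_one_add_sq_le hδ0 hδ1 (margin δ b n),
        le_max_right (margin δ b n - 1) 0]

lemma sum_marginWeight_ge (hδ0 : 0 < δ) (hδ1 : δ ≤ 1) (hβ : 0 ≤ β) (b : ℕ → Bool)
    (n : ℕ) : β * ((max (margin δ b n) 0 ^ 2 - 3 * δ * n) / (2 * δ)) ≤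
      ∑ i ∈ range n, marginWeight δ β b i := by
  simp only [marginWeight, ← mul_sum]
  refine mul_le_mul_of_nonneg_left ((div_le_iff₀ (by positivity)).2 ?_) hβ
  linarith [sq_max_margin_le hδ0.le hδ1 b n]

end margin

noncomputable def capRate (δ : ℝ) (K : ℕ) : ℝ := δ / (1 - δ) / (2 * K * (δ * (K - 1) + 1))

lemma sq_div_le_mul_capRate {δ δ' : ℝ} {n : ℕ} (hn : (1 : ℝ) ≤ n) (hδ'0 : 0 ≤ δ') (hδ' : δ' < δ)
    (hδ1 : δ < 1) (hsmall : ((δ - δ') * n) ^ 2 < 6 * δ * (n + 1)) :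
    (δ - δ') ^ 2 / (128 * δ) ≤ n * capRate δ (n + 1) := by
  have hδ0 : 0 < δ := by linarith
  have h1δ : 0 < 1 - δ := by linarith
  have hcap : n * capRate δ (n + 1) = n * δ / ((1 - δ) * (2 * (n + 1) * (δ * n + 1))) := by
    rw [capRate, Nat.cast_add_one, add_sub_cancel_right]
    field_simp
  rw [hcap, div_le_div_iff₀ (by positivity) (by positivity)]
  set d := (δ - δ') ^ 2 with hd
  have hd0 : 0 ≤ d := sq_nonneg _
  have hdδ : d ≤ δ ^ 2 := by nlinarith
  have hdrop : d * ((1 - δ) * (2 * (n + 1) * (δ * n + 1))) ≤ d * (2 * (n + 1) * (δ * n + 1)) :=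
    mul_le_mul_of_nonneg_left (by nlinarith) hd0
  refine hdrop.trans ?_
  rcases le_or_gt (δ * n) 1 with hδn | hδn
  · nlinarith [mul_le_mul_of_nonneg_left hδn (by positivity : (0 : ℝ) ≤ d * (n + 1))]
  · have hsmall' : d * n ^ 2 < 6 * δ * (n + 1) := by rw [hd]; nlinarith
    refine le_of_mul_le_mul_left ?_ (by linarith : (0 : ℝ) < n)
    nlinarith [mul_lt_mul_of_pos_left hsmall' (by positivity : (0 : ℝ) < 4 * δ * (n + 1)),
      mul_le_mul_of_nonneg_left hδn.le (by positivity : (0 : ℝ) ≤ d * (n + 1) * n)]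

lemma sq_div_le_of_sq_le {δ δ' M : ℝ} {n : ℕ} (hn : (1 : ℝ) ≤ n) (hδ0 : 0 < δ)
    (hbig : 6 * δ * (n + 1) ≤ ((δ - δ') * n) ^ 2) (hM : ((δ - δ') * n) ^ 2 ≤ M) :
    (δ - δ') ^ 2 / (128 * δ) ≤ 1 / (3 * ((n + 1 : ℕ) : ℝ) ^ 2) * ((M - 3 * δ * n) / (2 * δ)) := by
  have hhalf : ((δ - δ') * n) ^ 2 / (4 * δ) ≤ (M - 3 * δ * n) / (2 * δ) := by
    rw [div_le_div_iff₀ (by positivity) (by positivity)]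
    nlinarith
  have hsq : (δ - δ') ^ 2 / (128 * δ) ≤
      1 / (3 * ((n + 1 : ℕ) : ℝ) ^ 2) * (((δ - δ') * n) ^ 2 / (4 * δ)) := by
    rw [show 1 / (3 * ((n + 1 : ℕ) : ℝ) ^ 2) * (((δ - δ') * n) ^ 2 / (4 * δ)) =
      (δ - δ') ^ 2 / δ * (n ^ 2 / (12 * (n + 1) ^ 2)) by push_cast; field_simp; ring,
      show (δ - δ') ^ 2 / (128 * δ) = (δ - δ') ^ 2 / δ * (1 / 128) by field_simp]
    refine mul_le_mul_of_nonneg_left ?_ (by positivity)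
    rw [div_le_div_iff₀ (by positivity) (by positivity)]
    nlinarith
  exact hsq.trans (mul_le_mul_of_nonneg_left hhalf (by positivity))

noncomputable def frogWeight (δ : ℝ) (K : ℕ) (b : ℕ → Bool) (i : ℕ) : ℝ :=
  capWeight (δ * (K - 1)) (capRate δ K) b i + marginWeight δ (1 / (3 * K ^ 2)) b i

section frog

variable {δ : ℝ} {K : ℕ}

lemma capRate_nonneg (hδ0 : 0 ≤ δ) (hδ1 : δ < 1) : 0 ≤ capRate δ K :=
  div_nonneg (div_nonneg hδ0 (by linarith)) (mul_nonneg (by positivity) (by nlinarith))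

lemma frogWeight_nonneg (hδ0 : 0 ≤ δ) (hδ1 : δ < 1) (b : ℕ → Bool) (i : ℕ) :
    0 ≤ frogWeight δ K b i :=
  add_nonneg (capWeight_nonneg (capRate_nonneg hδ0 hδ1) b i)
    (marginWeight_nonneg (by positivity) b i)

lemma frogWeight_congr {b b' : ℕ → Bool} {i : ℕ} (h : ∀ j < i, b j = b' j) :
    frogWeight δ K b i = frogWeight δ K b' i := by
  rw [frogWeight, frogWeight, capWeight_congr h, marginWeight_congr h]

noncomputable def frogStrategy (δ : ℝ) (K : ℕ) (hδ0 : 0 ≤ δ) (hδ1 : δ < 1) : FrogStrategy :=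
  .ofWeights K (frogWeight δ K) (frogWeight_nonneg hδ0 hδ1) fun _ _ _ h => frogWeight_congr h

lemma deathProb_frogStrategy_le (hδ0 : 0 ≤ δ) (hδ1 : δ < 1) (hK : 0 < K) (b : ℕ → Bool) :
    deathProb (frogStrategy δ K hδ0 hδ1) b ≤
      δ / (1 - δ) * succProb (frogStrategy δ K hδ0 hδ1) b + δ / ((1 - δ) * K) := by
  have h1δ : 0 < 1 - δ := by linarith
  have hK' : (1 : ℝ) ≤ K := by exact_mod_cast hK
  have hE := capRate_nonneg (K := K) hδ0 hδ1
  have hβ : (0 : ℝ) ≤ 1 / (3 * K ^ 2) := by positivity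
  set G : ℕ → ℝ := fun j => capPotential (δ * (K - 1)) (capRate δ K) b j +
    marginPotential δ (1 / (3 * K ^ 2)) K b j
  have hG0 : G 0 = δ / ((1 - δ) * K) := by
    have : 0 < δ * ((K : ℝ) - 1) + 1 := by nlinarith
    simp only [G, capPotential_zero (by nlinarith : 0 ≤ δ * ((K : ℝ) - 1)), marginPotential_zero,
      capRate]
    field_simp
    ring
  refine hG0 ▸ FrogStrategy.deathProb_ofWeights_le (by positivity) b (G := G) ?_ ?_
  · intro j hj
    exact add_nonneg (capPotential_nonneg hE b j)
      (marginPotential_nonneg hδ0 hδ1 hβ (by exact_mod_cast hj) b)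
  · intro j _
    simp only [G, frogWeight, netDeath_add]
    linarith [netDeath_capWeight_le (m := δ * (K - 1)) (div_nonneg hδ0 h1δ.le) hE b j,
      netDeath_marginWeight_le (T := K) hδ0 hδ1 hβ b j]

lemma sum_frogWeight_ge {δ' : ℝ} (hK : 1 < K) (hδ'0 : 0 ≤ δ') (hδ' : δ' < δ)
    (hδ1 : δ < 1) {b : ℕ → Bool} (hb : (cars b (K - 1) : ℝ) ≤ δ' * (K - 1)) :
    (δ - δ') ^ 2 / (128 * δ) ≤ ∑ i ∈ range K, frogWeight δ K b i := by
  obtain ⟨n, rfl⟩ : ∃ n, K = n + 1 := ⟨K - 1, by omega⟩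
  have hn : (1 : ℝ) ≤ n := by exact_mod_cast Nat.le_of_lt_succ hK
  have hδ0 : 0 < δ := by linarith
  rw [Nat.add_sub_cancel, Nat.cast_add_one, add_sub_cancel_right] at hb
  set β : ℝ := 1 / (3 * ((n + 1 : ℕ) : ℝ) ^ 2)
  have hβ0 : 0 ≤ β := by positivity
  have hsplit : ∑ i ∈ range n, capWeight (δ * ((n + 1 : ℕ) - 1)) (capRate δ (n + 1)) b i +
      ∑ i ∈ range n, marginWeight δ β b i ≤ ∑ i ∈ range (n + 1), frogWeight δ (n + 1) b i := by
    rw [sum_range_succ, ← sum_add_distrib]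
    exact le_add_of_nonneg_right (frogWeight_nonneg hδ0.le hδ1 b n)
  have hcap := sum_capWeight_eq (E := capRate δ (n + 1)) (m := δ * ((n + 1 : ℕ) - 1)) (b := b)
    (n := n) (by push_cast; nlinarith)
  have hcap0 := sum_nonneg fun i (_ : i ∈ range n) =>
    capWeight_nonneg (m := δ * ((n + 1 : ℕ) - 1)) (capRate_nonneg (K := n + 1) hδ0.le hδ1) b i
  have hmargin0 := sum_nonneg fun i (_ : i ∈ range n) => marginWeight_nonneg (δ := δ) hβ0 b i
  set A := (δ - δ') * n
  have hAsq : A ^ 2 ≤ max (margin δ b n) 0 ^ 2 :=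
    pow_le_pow_left₀ (by positivity) (le_max_of_le_left (by rw [margin]; nlinarith)) 2
  rcases le_or_gt (6 * δ * (n + 1)) (A ^ 2) with hbig | hsmall
  · calc (δ - δ') ^ 2 / (128 * δ)
          ≤ β * ((max (margin δ b n) 0 ^ 2 - 3 * δ * n) / (2 * δ)) :=
          sq_div_le_of_sq_le hn hδ0 hbig hAsq
      _ ≤ ∑ i ∈ range n, marginWeight δ β b i := sum_marginWeight_ge hδ0 hδ1.le hβ0 b n
      _ ≤ _ := by linarith
  · calc (δ - δ') ^ 2 / (128 * δ) ≤ n * capRate δ (n + 1) :=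
          sq_div_le_mul_capRate hn hδ'0 hδ' hδ1 hsmall
      _ ≤ _ := by linarith

end frog

/-- Lemma 3.1: there are universal constants `c, C > 0` such that for every `δ ∈ (0,1)`
and integer `K > 1` there is a frog-strategy `T` with, for every `b`:
(i) `T` never crosses at a minute later than `K` (0-indexed: `prob b (some i) = 0` for `i ≥ K`);
(ii) if the density of 1s among `b_1, …, b_{K-1}` is at most `δ' < δ` then
`π_{T,b}(∞) ≤ 1 - c (δ - δ')² / δ`;
(iii) `DP(T,b) ≤ (δ/(1-δ)) Succ(T,b) + C δ/((1-δ)K)`. -/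
theorem finite_interval_lemma :
    ∃ c C : ℝ, 0 < c ∧ 0 < C ∧
      ∀ δ : ℝ, 0 < δ → δ < 1 → ∀ K : ℕ, 1 < K →
        ∃ T : FrogStrategy, ∀ b : ℕ → Bool,
          (∀ i : ℕ, K ≤ i → T.prob b (some i) = 0) ∧
          (∀ δ' : ℝ, (cars b (K - 1) : ℝ) / (K - 1) ≤ δ' → δ' < δ →
            T.prob b none ≤ 1 - c * (δ - δ') ^ 2 / δ) ∧
          deathProb T b ≤ δ / (1 - δ) * succProb T b + C * δ / ((1 - δ) * K) := by
  refine ⟨1 / 128, 1, by norm_num, by norm_num, fun δ hδ0 hδ1 K hK =>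
    ⟨frogStrategy δ K hδ0.le hδ1, fun b => ⟨fun i hi => ?_, fun δ' hb hδ' => ?_, ?_⟩⟩⟩
  · simp [frogStrategy, hi.not_gt]
  · have hK1 : (0 : ℝ) < K - 1 := by
      have : (2 : ℝ) ≤ K := by exact_mod_cast hK
      linarith
    have hδ'0 : 0 ≤ δ' := le_trans (by positivity) hb
    have hvol := sum_frogWeight_ge hK hδ'0 hδ' hδ1 ((div_le_iff₀ hK1).1 hb)
    have hle_one : (δ - δ') ^ 2 / (128 * δ) ≤ 1 := by
      rw [div_le_one (by positivity)]
      nlinarith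
    rw [show 1 / 128 * (δ - δ') ^ 2 / δ = (δ - δ') ^ 2 / (128 * δ) by ring]
    simp only [frogStrategy, FrogStrategy.ofWeights_prob_none]
    linarith [le_min hvol hle_one]
  · simpa using deathProb_frogStrategy_le hδ0.le hδ1 (by omega) b
end

section
/- For every ε ∈ (0,1) and every frog-strategy S, there exists a sequence b ∈ {0,1}^ω such that lim_{t→∞} N_t(b)/t = ε and Succ(S, b) < 1 − ε. Consequently, Theorem 2.2 is optimal: no frog-strategy achieves success probability 1 − ε or more on every ε-weakly sparse sequence. -/
/-!
Let the cars `b` be i.i.d. Bernoulli(`ε`).  By the strong law of large numbers `N_t(b)/t → ε`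
almost surely, and since the frog's decision to cross at minute `i` is independent of `b_i`,
its expected success probability is `(1 - ε)` times its expected total crossing probability,
hence at most `1 - ε`.  To make this strict, either the frog almost surely never crosses, or it
crosses at some minute `i₀` with positive expected probability; in the second case we put an
extra car at minute `i₀`, which does not change the density but kills that part of the success.
Finally, some realisation of density `ε` has success probability at most the average.
-/

open MeasureTheory ProbabilityTheory Filter unitInterval
open scoped ENNReal Topology

lemma DependsOn.exists_eq_comp_restrict {ι β : Type*} {F : (ι → Bool) → β} {s : Finset ι}
    (hF : DependsOn F s) : ∃ G : (s → Bool) → β, F = G ∘ s.restrict :=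
  have : Nonempty β := ⟨F fun _ => false⟩
  dependsOn_iff_exists_comp.1 hF

lemma DependsOn.measurable_of_finset {ι β : Type*} [MeasurableSpace β] {F : (ι → Bool) → β}
    {s : Finset ι} (hF : DependsOn F s) : Measurable F := by
  obtain ⟨G, rfl⟩ := hF.exists_eq_comp_restrict
  exact (measurable_of_countable G).comp (Finset.measurable_restrict s)

lemma DependsOn.comp_update {ι β : Type*} [DecidableEq ι] {F : (ι → Bool) → β} {s : Set ι}
    (hF : DependsOn F s) (i : ι) (c : Bool) : DependsOn (fun ω => F (Function.update ω i c)) s :=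
  fun ω ω' h => hF fun j hj => by
    by_cases hji : j = i
    · simp [hji]
    · simp [Function.update_of_ne hji, h j hj]

lemma ENNReal.tsum_ite_eq_zero_lt {ι : Type*} [DecidableEq ι] {M : ι → ℝ≥0∞} {c : ℝ≥0∞}
    (hM : ∑' i, M i ≤ c) (hc : c ≠ ∞) {i₀ : ι} (h₀ : M i₀ ≠ 0) :
    ∑' i, (if i = i₀ then 0 else M i) < c :=
  calc ∑' i, (if i = i₀ then 0 else M i)
      < (∑' i, if i = i₀ then 0 else M i) + M i₀ :=
        ENNReal.lt_add_right (ne_top_of_le_ne_top hc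
          ((ENNReal.tsum_le_tsum fun i => by split_ifs <;> simp).trans hM)) h₀
    _ = ∑' i, M i := by convert (add_comm _ _).trans (ENNReal.tsum_eq_add_tsum_ite (f := M) i₀).symm
    _ ≤ c := hM

lemma iIndepFun_eval_infinitePi {ι : Type*} {X : ι → Type*} [∀ i, MeasurableSpace (X i)]
    (ν : ∀ i, Measure (X i)) [∀ i, IsProbabilityMeasure (ν i)] :
    iIndepFun (fun i (ω : ∀ i, X i) => ω i) (Measure.infinitePi ν) :=
  iIndepFun_infinitePi (X := fun _ => id) fun _ => measurable_id

lemma lintegral_infinitePi_ite_eval_eq_false {ι : Type*} (ν : ι → Measure Bool)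
    [∀ i, IsProbabilityMeasure (ν i)] {s : Finset ι} {n : ι} (hn : n ∉ s)
    {F : (ι → Bool) → ℝ≥0∞} (hF : DependsOn F s) :
    ∫⁻ ω, (if ω n = false then F ω else 0) ∂Measure.infinitePi ν
      = ν n {false} * ∫⁻ ω, F ω ∂Measure.infinitePi ν := by
  obtain ⟨G, rfl⟩ := hF.exists_eq_comp_restrict
  set χ : (({n} : Finset ι) → Bool) → ℝ≥0∞ := fun w =>
    ({false} : Set Bool).indicator 1 (w ⟨n, Finset.mem_singleton_self n⟩)
  have hindep : IndepFun (χ ∘ Finset.restrict {n}) (G ∘ Finset.restrict s)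
      (Measure.infinitePi ν) :=
    ((iIndepFun_eval_infinitePi ν).indepFun_finset _ _
      (Finset.disjoint_singleton_left.2 hn) fun _ => measurable_pi_apply _).comp
      (measurable_of_countable _) (measurable_of_countable _)
  have hχ : ∫⁻ ω, (χ ∘ Finset.restrict {n}) ω ∂Measure.infinitePi ν = ν n {false} := by
    rw [← lintegral_indicator_one (measurableSet_singleton false),
      ← (measurePreserving_eval_infinitePi ν n).lintegral_comp (measurable_of_countable _)]
    rfl
  rw [← hχ, ← lintegral_mul_eq_lintegral_mul_lintegral_of_indepFun''
    ((measurable_of_countable _).comp (Finset.measurable_restrict _)).aemeasurable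
    ((measurable_of_countable _).comp (Finset.measurable_restrict _)).aemeasurable hindep]
  congr with ω
  by_cases h : ω n <;> simp [χ, h]

lemma cars_le_cars_add_one {b b' : ℕ → Bool} {i : ℕ} (h : ∀ j, j ≠ i → b' j = b j) (t : ℕ) :
    cars b' t ≤ cars b t + 1 := by
  classical
  calc cars b' t ≤ (insert i ((Finset.range t).filter fun j => b j = true)).card := by
        refine Finset.card_le_card fun j hj => ?_
        rw [Finset.mem_filter] at hj
        by_cases hji : j = i
        · exact hji ▸ Finset.mem_insert_self _ _
        · exact Finset.mem_insert_of_mem (Finset.mem_filter.2 ⟨hj.1, h j hji ▸ hj.2⟩)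
    _ ≤ cars b t + 1 := Finset.card_insert_le _ _

lemma tendsto_cars_div_of_eq_of_ne {b b' : ℕ → Bool} {i : ℕ} (h : ∀ j, j ≠ i → b' j = b j)
    {a : ℝ} (hb : Tendsto (fun t : ℕ => (cars b t : ℝ) / t) atTop (𝓝 a)) :
    Tendsto (fun t : ℕ => (cars b' t : ℝ) / t) atTop (𝓝 a) := by
  have hinv := tendsto_one_div_atTop_nhds_zero_nat (𝕜 := ℝ)
  refine tendsto_of_tendsto_of_tendsto_of_le_of_le (g := fun t : ℕ => ((cars b t : ℝ) - 1) / t)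
    (h := fun t : ℕ => ((cars b t : ℝ) + 1) / t) (by simpa [sub_div] using hb.sub hinv)
    (by simpa [add_div] using hb.add hinv) (fun t => ?_) (fun t => ?_)
  · have hle : (cars b t : ℝ) ≤ cars b' t + 1 := by
      exact_mod_cast cars_le_cars_add_one (fun j hj => (h j hj).symm) t
    exact div_le_div_of_nonneg_right (sub_le_iff_le_add.2 hle) t.cast_nonneg
  · have hle : (cars b' t : ℝ) ≤ cars b t + 1 := by exact_mod_cast cars_le_cars_add_one h t
    exact div_le_div_of_nonneg_right hle t.cast_nonneg

noncomputable def bernoulliSeq (p : I) : Measure (ℕ → Bool) :=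
  Measure.infinitePi fun _ => Ber(true, false, p)

instance (p : I) : IsProbabilityMeasure (bernoulliSeq p) := by
  unfold bernoulliSeq; infer_instance

lemma bernoulliMeasure_singleton_false (p : I) :
    Ber(true, false, p) {false} = ENNReal.ofReal (1 - p) := by
  rw [bernoulliMeasure_apply_of_notMem_of_mem p (measurableSet_singleton false) (by simp) rfl,
    ENNReal.ofReal, ← coe_symm_eq, Real.toNNReal_of_nonneg (σ p).2.1]
  rfl

lemma bernoulliSeq_ae_tendsto_cars_div (p : I) :
    ∀ᵐ ω ∂bernoulliSeq p, Tendsto (fun t : ℕ => (cars ω t : ℝ) / t) atTop (𝓝 p) := by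
  set f : Bool → ℝ := fun c => if c = true then 1 else 0
  have hf : Measurable f := measurable_of_countable f
  have heval (i : ℕ) : MeasurePreserving (Function.eval i) (bernoulliSeq p) Ber(true, false, p) :=
    measurePreserving_eval_infinitePi _ i
  have hident (i : ℕ) : IdentDistrib (fun ω : ℕ → Bool => f (ω i)) (fun ω => f (ω 0))
      (bernoulliSeq p) (bernoulliSeq p) :=
    IdentDistrib.comp ⟨(heval i).measurable.aemeasurable, (heval 0).measurable.aemeasurable,
      (heval i).map_eq.trans (heval 0).map_eq.symm⟩ hf
  have hindep : Pairwise fun i j =>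
      IndepFun (fun ω : ℕ → Bool => f (ω i)) (fun ω => f (ω j)) (bernoulliSeq p) :=
    fun i j hij =>
      ((iIndepFun_eval_infinitePi fun _ : ℕ => Ber(true, false, p)).indepFun hij).comp hf hf
  have hmean : ∫ ω, f (ω 0) ∂bernoulliSeq p = p := by
    rw [← integral_map (heval 0).measurable.aemeasurable hf.aestronglyMeasurable,
      (heval 0).map_eq, integral_bernoulliMeasure]
    simp [f]
  have hint : Integrable (fun ω : ℕ → Bool => f (ω 0)) (bernoulliSeq p) :=
    (heval 0).integrable_comp_of_integrable (integrable_bernoulliMeasure _ _ _ f)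
  filter_upwards [strong_law_ae_real _ hint hindep hident] with ω hω
  rw [hmean] at hω
  convert hω using 3 with t
  simp only [cars, Finset.card_filter, Nat.cast_sum, Nat.cast_ite, Nat.cast_one, Nat.cast_zero,
    f]

lemma lintegral_bernoulliSeq_tsum_ite_eq_false (p : I) {q : ℕ → (ℕ → Bool) → ℝ≥0∞}
    (hq : ∀ i, DependsOn (q i) (Finset.range i)) :
    ∫⁻ ω, ∑' i, (if ω i = false then q i ω else 0) ∂bernoulliSeq p
      = ENNReal.ofReal (1 - p) * ∑' i, ∫⁻ ω, q i ω ∂bernoulliSeq p := by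
  have hmeas (i : ℕ) : Measurable fun ω : ℕ → Bool => if ω i = false then q i ω else 0 := by
    refine DependsOn.measurable_of_finset (s := Finset.range (i + 1)) fun ω ω' h => ?_
    simp only [Finset.coe_range, Set.mem_Iio] at h
    rw [h i i.lt_succ_self, hq i fun j hj => h j (by simp at hj; omega)]
  rw [lintegral_tsum fun i => (hmeas i).aemeasurable, ← ENNReal.tsum_mul_left]
  refine tsum_congr fun i => ?_
  rw [← bernoulliMeasure_singleton_false]
  exact lintegral_infinitePi_ite_eval_eq_false _ Finset.notMem_range_self (hq i)

namespace FrogStrategy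

variable (S : FrogStrategy)

lemma summable_prob (b : ℕ → Bool) : Summable (S.prob b) := by
  by_contra h
  exact zero_ne_one ((tsum_eq_zero_of_not_summable h).symm.trans (S.total b))

lemma tsum_ofReal_prob_some_le_one (b : ℕ → Bool) :
    ∑' i, ENNReal.ofReal (S.prob b (some i)) ≤ 1 := by
  calc ∑' i, ENNReal.ofReal (S.prob b (some i))
      ≤ ∑' o, ENNReal.ofReal (S.prob b o) :=
        ENNReal.tsum_comp_le_tsum_of_injective (Option.some_injective ℕ) _
    _ = 1 := by
        rw [← ENNReal.ofReal_tsum_of_nonneg (S.nonneg b) (S.summable_prob b), S.total b,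
          ENNReal.ofReal_one]

lemma ofReal_succProb (b : ℕ → Bool) : ENNReal.ofReal (succProb S b)
    = ∑' i, if b i = false then ENNReal.ofReal (S.prob b (some i)) else 0 := by
  have hnonneg (i : ℕ) : 0 ≤ if b i = false then S.prob b (some i) else 0 := by
    split_ifs
    exacts [S.nonneg _ _, le_rfl]
  have hle (i : ℕ) : (if b i = false then S.prob b (some i) else 0) ≤ S.prob b (some i) := by
    split_ifs
    exacts [le_rfl, S.nonneg _ _]
  rw [succProb, ENNReal.ofReal_tsum_of_nonneg hnonneg <| Summable.of_nonneg_of_le hnonneg hle <|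
    (S.summable_prob b).comp_injective (Option.some_injective ℕ)]
  congr with i
  split_ifs <;> simp

lemma dependsOn_prob_some (i : ℕ) :
    DependsOn (fun b => S.prob b (some i)) (Finset.range i) :=
  fun b b' h => S.adapted b b' i fun j hj => h j (by simpa using hj)

lemma lintegral_ofReal_succProb_eq_zero {p : I}
    (h : ∀ i, ∫⁻ ω, ENNReal.ofReal (S.prob ω (some i)) ∂bernoulliSeq p = 0) :
    ∫⁻ ω, ENNReal.ofReal (succProb S ω) ∂bernoulliSeq p = 0 := by
  simp_rw [ofReal_succProb]
  rw [lintegral_bernoulliSeq_tsum_ite_eq_false p fun i _ _ hω =>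
    congrArg ENNReal.ofReal (S.dependsOn_prob_some i hω)]
  simp [h]

lemma lintegral_ofReal_succProb_update_lt {p : I} (hp : (p : ℝ) < 1) {i₀ : ℕ}
    (h : ∫⁻ ω, ENNReal.ofReal (S.prob ω (some i₀)) ∂bernoulliSeq p ≠ 0) :
    ∫⁻ ω, ENNReal.ofReal (succProb S (Function.update ω i₀ true)) ∂bernoulliSeq p
      < ENNReal.ofReal (1 - p) := by
  set P : ℕ → (ℕ → Bool) → ℝ≥0∞ :=
    fun i ω => ENNReal.ofReal (S.prob (Function.update ω i₀ true) (some i))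
  have hP (i : ℕ) : DependsOn (P i) (Finset.range i) := fun _ _ hω =>
    congrArg ENNReal.ofReal ((S.dependsOn_prob_some i).comp_update i₀ true hω)
  have hPsum : ∑' i, ∫⁻ ω, P i ω ∂bernoulliSeq p ≤ 1 := by
    rw [← lintegral_tsum fun i => (hP i).measurable_of_finset.aemeasurable]
    calc ∫⁻ ω, ∑' i, P i ω ∂bernoulliSeq p ≤ ∫⁻ _, 1 ∂bernoulliSeq p :=
          lintegral_mono fun ω => S.tsum_ofReal_prob_some_le_one _
      _ = 1 := by simp
  have hP₀ : ∫⁻ ω, P i₀ ω ∂bernoulliSeq p ≠ 0 := by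
    convert h using 3 with ω
    exact congrArg ENNReal.ofReal
      (S.adapted (Function.update ω i₀ true) ω i₀ fun j hj => Function.update_of_ne hj.ne _ _)
  have hsucc (ω : ℕ → Bool) : ENNReal.ofReal (succProb S (Function.update ω i₀ true))
      = ∑' i, if ω i = false then (if i = i₀ then 0 else P i ω) else 0 := by
    rw [ofReal_succProb]
    congr with i
    by_cases hi : i = i₀
    · simp [hi]
    · simp [hi, P]
  calc ∫⁻ ω, ENNReal.ofReal (succProb S (Function.update ω i₀ true)) ∂bernoulliSeq p
      = ENNReal.ofReal (1 - p) * ∑' i, (if i = i₀ then 0 else ∫⁻ ω, P i ω ∂bernoulliSeq p) := by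
        simp_rw [hsucc]
        rw [lintegral_bernoulliSeq_tsum_ite_eq_false p fun i ω ω' hω => by rw [hP i hω]]
        congr with i
        split_ifs <;> simp
    _ < ENNReal.ofReal (1 - p) * 1 :=
        ENNReal.mul_lt_mul_right (ENNReal.ofReal_pos.2 (sub_pos.2 hp)).ne' ENNReal.ofReal_ne_top
          (ENNReal.tsum_ite_eq_zero_lt hPsum ENNReal.one_ne_top hP₀)
    _ = ENNReal.ofReal (1 - p) := mul_one _

end FrogStrategy

lemma exists_tendsto_cars_div_and_succProb_lt {S : FrogStrategy} {p : I}
    {f : (ℕ → Bool) → ℕ → Bool} {i : ℕ} (hf : ∀ ω j, j ≠ i → f ω j = ω j)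
    (hlt : ∫⁻ ω, ENNReal.ofReal (succProb S (f ω)) ∂bernoulliSeq p < ENNReal.ofReal (1 - p)) :
    ∃ b, Tendsto (fun t : ℕ => (cars b t : ℝ) / t) atTop (𝓝 p) ∧ succProb S b < 1 - p := by
  by_contra! h
  have hae : ∀ᵐ ω ∂bernoulliSeq p,
      ENNReal.ofReal (1 - p) ≤ ENNReal.ofReal (succProb S (f ω)) :=
    (bernoulliSeq_ae_tendsto_cars_div p).mono fun ω hω =>
      ENNReal.ofReal_le_ofReal (h _ (tendsto_cars_div_of_eq_of_ne (hf ω) hω))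
  refine hlt.not_ge ?_
  simpa using lintegral_mono_ae hae

/-- Optimality of the main theorem: for every `ε ∈ (0,1)` and every frog-strategy `S`
there is a sequence `b` with `lim_{t→∞} N_t(b)/t = ε` on which `S` succeeds with
probability `< 1 - ε`.  Consequently no frog-strategy succeeds with probability `≥ 1 - ε`
on every `ε`-weakly sparse sequence. -/
theorem main_theorem_optimal (ε : ℝ) (hε0 : 0 < ε) (hε1 : ε < 1) (S : FrogStrategy) :
    (∃ b : ℕ → Bool,
        Filter.Tendsto (fun t : ℕ => (cars b t : ℝ) / t) Filter.atTop (nhds ε) ∧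
        succProb S b < 1 - ε) ∧
    ¬ (∀ b : ℕ → Bool, epsWeaklySparse ε b → 1 - ε ≤ succProb S b) := by
  let p : I := ⟨ε, hε0.le, hε1.le⟩
  have hmain : ∃ b : ℕ → Bool,
      Filter.Tendsto (fun t : ℕ => (cars b t : ℝ) / t) Filter.atTop (nhds ε) ∧
        succProb S b < 1 - ε := by
    by_cases h : ∀ i, ∫⁻ ω, ENNReal.ofReal (S.prob ω (some i)) ∂bernoulliSeq p = 0
    · exact exists_tendsto_cars_div_and_succProb_lt (f := fun ω => ω) (i := 0) (fun _ _ _ => rfl)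
        ((S.lintegral_ofReal_succProb_eq_zero h).trans_lt (by simpa [p] using hε1))
    · obtain ⟨i₀, hi₀⟩ := not_forall.1 h
      exact exists_tendsto_cars_div_and_succProb_lt (fun ω j hj => Function.update_of_ne hj _ _)
        (S.lintegral_ofReal_succProb_update_lt hε1 hi₀)
  obtain ⟨b, hb, hlt⟩ := hmain
  exact ⟨⟨b, hb, hlt⟩, fun H => (H b hb.liminf_eq.le).not_gt hlt⟩
end
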